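/- There exist a constant L > 0 and a strictly decreasing sequence d₁ > d₂ > ⋯ of positive real numbers converging to 0 such that for every N ≥ 1 there is a measurable set C ⊆ S¹ with μ(C) ≥ L that avoids the distances in {d₁, …, d_N}. -/

import Mathlib

open MeasureTheory Filter Set Real
open scoped RealInnerProductSpace ENNReal

/-!
Take `dᵢ = π / 3ⁱ`. Given `N`, put `u = π / 3ᴺ`, so that `dᵢ` is an odd multiple of `u` for
`i ≤ N`, and let `C` be the set of points of `S¹` whose argument lies in one of the arcs
`[2ku, (2k+1)u)`. Since `2π = 2·3ᴺ·u` is an even multiple of `u`, two points of `C` never differ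
in argument by an odd multiple of `u` modulo `2π`, so `C` avoids every `dᵢ`. The rotation by `u`
exchanges `C` with its complement in `S¹`, hence rotation invariance forces `μ C = 1/2`.
-/

lemma Int.even_floor_iff_not_even_floor_of_eq_add_odd {a b : ℝ} {j : ℤ} (hj : Odd j)
    (h : a = b + j) : Even ⌊a⌋ ↔ ¬Even ⌊b⌋ := by
  rw [h, Int.floor_add_intCast, Int.even_add]
  have := Int.not_even_iff_odd.mpr hj
  tauto

lemma Real.Angle.even_floor_div_iff_of_coe_eq_add {θ ψ : ℝ} {n : ℕ} (hn : n ≠ 0) {m : ℤ}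
    (hm : Odd m) (h : (θ : Real.Angle) = ψ + ↑(m * (π / n))) :
    Even ⌊θ / (π / n)⌋ ↔ ¬Even ⌊ψ / (π / n)⌋ := by
  rw [← Real.Angle.coe_add, Real.Angle.angle_eq_iff_two_pi_dvd_sub] at h
  obtain ⟨k, hk⟩ := h
  refine Int.even_floor_iff_not_even_floor_of_eq_add_odd (j := m + 2 * n * k)
    (hm.add_even ((even_two_mul _).mul_right _)) ?_
  rw [sub_eq_iff_eq_add'.mp hk]
  push_cast
  field_simp
  ring

def evenArcs (u : ℝ) : Set ℂ := {z | ‖z‖ = 1 ∧ Even ⌊Complex.arg z / u⌋}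

lemma measurableSet_evenArcs (u : ℝ) : MeasurableSet (evenArcs u) :=
  (measurableSet_eq_fun measurable_norm measurable_const).inter
    ((Complex.measurable_arg.div_const u).floor
      (MeasurableSet.of_discrete (s := {k : ℤ | Even k})))

lemma exp_mul_I_mul_mem_evenArcs_iff {n : ℕ} (hn : n ≠ 0) {z : ℂ} (hz : ‖z‖ = 1) :
    Complex.exp (↑(π / n) * Complex.I) * z ∈ evenArcs (π / n) ↔ z ∉ evenArcs (π / n) := by
  have hz0 : z ≠ 0 := norm_ne_zero_iff.mp (hz.symm ▸ one_ne_zero)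
  have harg : (Complex.arg (Complex.exp (↑(π / n) * Complex.I) * z) : Real.Angle)
      = Complex.arg z + ↑((1 : ℤ) * (π / n)) := by
    rw [Complex.arg_mul_coe_angle (Complex.exp_ne_zero _) hz0, Complex.arg_exp_mul_I,
      Real.Angle.coe_toIocMod, add_comm, Int.cast_one, one_mul]
  simp only [evenArcs, mem_ofPred_eq, norm_mul, Complex.norm_exp_ofReal_mul_I, one_mul, hz,
    true_and]
  exact Real.Angle.even_floor_div_iff_of_coe_eq_add hn odd_one harg

lemma arccos_inner_ne_of_mem_evenArcs {n : ℕ} (hn : n ≠ 0) {z w : ℂ}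
    (hz : z ∈ evenArcs (π / n)) (hw : w ∈ evenArcs (π / n)) {m : ℕ} (hm : Odd m) :
    arccos ⟪z, w⟫ ≠ m * (π / n) := by
  have hz0 : z ≠ 0 := norm_ne_zero_iff.mp (hz.1 ▸ one_ne_zero)
  have hw0 : w ≠ 0 := norm_ne_zero_iff.mp (hw.1 ▸ one_ne_zero)
  have hangle : arccos ⟪z, w⟫ = InnerProductGeometry.angle z w := by
    rw [InnerProductGeometry.angle, hz.1, hw.1, mul_one, div_one]
  rw [hangle, Complex.angle_eq_abs_arg hz0 hw0]
  intro h
  obtain ⟨m', hm', hdiv⟩ : ∃ m' : ℤ, Odd m' ∧ Complex.arg (z / w) = m' * (π / n) := by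
    rcases abs_eq (by positivity) |>.mp h with h' | h'
    · exact ⟨m, by exact_mod_cast hm, by rw [h', Int.cast_natCast]⟩
    · exact ⟨-m, by simpa using hm, by rw [h']; push_cast; ring⟩
  have hzw : (Complex.arg z : Real.Angle) = Complex.arg w + ↑(m' * (π / n)) := by
    rw [← hdiv, Complex.arg_div_coe_angle hz0 hw0, add_sub_cancel]
  exact (Real.Angle.even_floor_div_iff_of_coe_eq_add hn hm' hzw).mp hz.2 hw.2

lemma measure_eq_inv_two_of_preimage_ae_eq_compl {α : Type*} [MeasurableSpace α]
    {μ : Measure α} [IsProbabilityMeasure μ] {f : α → α} (hf : Measurable f)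
    (hμf : μ.map f = μ) {s : Set α} (hs : MeasurableSet s) (hfs : f ⁻¹' s =ᵐ[μ] (sᶜ : Set α)) :
    μ s = 2⁻¹ := by
  have hcompl : μ sᶜ = μ s := by
    rw [← measure_congr hfs, ← Measure.map_apply hf hs, hμf]
  apply ENNReal.eq_inv_of_mul_eq_one_left
  rw [mul_two, ← measure_univ (μ := μ), ← measure_add_measure_compl hs, hcompl]

theorem circle_no_density_decay
    (μ : Measure (EuclideanSpace ℝ (Fin 2)))
    (hprob : IsProbabilityMeasure μ)
    (hsupp : μ (Metric.sphere (0 : EuclideanSpace ℝ (Fin 2)) 1)ᶜ = 0)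
    (hinv : ∀ f : EuclideanSpace ℝ (Fin 2) ≃ₗᵢ[ℝ] EuclideanSpace ℝ (Fin 2),
      μ.map f = μ) :
    ∃ L : ℝ≥0∞, 0 < L ∧
      ∃ d : ℕ → ℝ,
        (∀ i, 0 < d i) ∧
        (∀ i j, i < j → d j < d i) ∧
        Tendsto d atTop (nhds 0) ∧
        ∀ N : ℕ, 1 ≤ N →
          ∃ C : Set (EuclideanSpace ℝ (Fin 2)),
            C ⊆ Metric.sphere (0 : EuclideanSpace ℝ (Fin 2)) 1 ∧
            MeasurableSet C ∧
            L ≤ μ C ∧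
            (∀ x ∈ C, ∀ y ∈ C, ∀ i, 1 ≤ i → i ≤ N →
              Real.arccos ⟪x, y⟫ ≠ d i) := by
  refine ⟨2⁻¹, by norm_num, fun i => π / (3 ^ i : ℕ), fun i => by positivity,
    fun i j hij => div_lt_div_of_pos_left pi_pos (by positivity) (by gcongr; norm_num),
    tendsto_const_nhds.div_atTop ?_, fun N _ => ?_⟩
  · exact tendsto_natCast_atTop_atTop.comp (tendsto_pow_atTop_atTop_of_one_lt (by norm_num))
  have hN : (3 ^ N : ℕ) ≠ 0 := by positivity
  let e := Complex.orthonormalBasisOneI.repr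
  let ρ := (e.symm.trans (rotation (Circle.exp (π / (3 ^ N : ℕ))))).trans e
  refine ⟨e.symm ⁻¹' evenArcs (π / (3 ^ N : ℕ)), fun x hx => ?_,
    (measurableSet_evenArcs _).preimage e.symm.continuous.measurable, ?_, ?_⟩
  · simpa using hx.1
  · refine (measure_eq_inv_two_of_preimage_ae_eq_compl ρ.continuous.measurable (hinv ρ)
      ((measurableSet_evenArcs _).preimage e.symm.continuous.measurable) ?_).ge
    filter_upwards [measure_eq_zero_iff_ae_notMem.mp hsupp] with x hx
    have hρ : e.symm (ρ x) = Complex.exp (↑(π / (3 ^ N : ℕ)) * Complex.I) * e.symm x := by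
      simp [ρ, rotation_apply, Circle.coe_exp]
    show (e.symm (ρ x) ∈ evenArcs _) = (e.symm x ∉ evenArcs _)
    rw [hρ, exp_mul_I_mul_mem_evenArcs_iff hN (by simpa using hx)]
  · intro x hx y hy i _ hiN
    have hd : π / (3 ^ i : ℕ) = (3 ^ (N - i) : ℕ) * (π / (3 ^ N : ℕ)) := by
      rw [← Nat.pow_sub_mul_pow 3 hiN]
      push_cast
      field_simp
    show _ ≠ π / (3 ^ i : ℕ)
    rw [← e.symm.inner_map_map, hd]
    exact arccos_inner_ne_of_mem_evenArcs hN hx hy (Odd.pow (by decide))
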